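/- Pigeonhole step for the full-set extraction: let t be a fixed injective n-tuple over an infinite type D, and let S be a finite set of n-tuples each of whose range intersects ds(t). If |S| > (2^n)^2 · n! · M, then there exist a nonempty set V ⊆ ds(t), a set of positions J ⊆ Fin n, a bijection assignment, and a subset S' ⊆ S with |S'| > M such that all tuples in S' agree on the positions in J, where they carry exactly the values of V in the same fixed order, and the values of V occur in tuples of S' only at positions in J. -/

import Mathlib

/-!
Record, for each tuple `s`, its trace on `T = ds(t)`: the tuple that keeps `s i` where `s i ∈ T` and
forgets it elsewhere. There are at most `(n + 1) ^ n` traces, and `(n + 1) ^ n ≤ 4 ^ n * n!`, so by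
pigeonhole more than `M` tuples of `S` share one trace. Any of them, `s₀`, serves as `g`, with
`J = {i | s₀ i ∈ T}`, which is nonempty because `s₀` meets `T`.
-/

open Finset Nat

theorem Nat.succ_pow_le_four_pow_mul_factorial (n : ℕ) : (n + 1) ^ n ≤ 4 ^ n * n ! := by
  refine Nat.le_of_mul_le_mul_right ?_ (Nat.factorial_pos n)
  calc (n + 1) ^ n * n ! ≤ (n + n)! := by rw [mul_comm]; exact Nat.factorial_mul_pow_le_factorial
    _ = n.centralBinom * n ! * n ! := by
          have := Nat.choose_mul_factorial_mul_factorial (Nat.le_add_left n n)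
          rw [Nat.add_sub_cancel] at this
          rw [Nat.centralBinom_eq_two_mul_choose, two_mul, ← this, mul_assoc]
    _ ≤ 4 ^ n * n ! * n ! := by gcongr; exact Nat.centralBinom_le_four_pow n

section Trace

variable {ι D : Type*} [DecidableEq D] (T : Finset D)

def traceOn (s : ι → D) : ι → Option D := fun i => if s i ∈ T then some (s i) else none

variable {T} {s s₀ : ι → D}

theorem mem_iff_of_traceOn_eq (h : traceOn T s = traceOn T s₀) (i : ι) : s i ∈ T ↔ s₀ i ∈ T := by
  have := congrFun h i
  unfold traceOn at this
  split_ifs at this; all_goals simp_all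

theorem apply_eq_of_traceOn_eq (h : traceOn T s = traceOn T s₀) {i : ι} (hi : s₀ i ∈ T) :
    s i = s₀ i := by
  have := congrFun h i
  unfold traceOn at this
  split_ifs at this; all_goals simp_all

theorem range_inter_eq_of_traceOn_eq (h : traceOn T s = traceOn T s₀) :
    Set.range s ∩ T = s₀ '' {i | s₀ i ∈ T} := by
  ext d
  constructor
  · rintro ⟨⟨i, rfl⟩, hi⟩
    have hi₀ := (mem_iff_of_traceOn_eq h i).1 hi
    exact ⟨i, hi₀, (apply_eq_of_traceOn_eq h hi₀).symm⟩
  · rintro ⟨i, hi₀, rfl⟩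
    exact ⟨⟨i, apply_eq_of_traceOn_eq h hi₀⟩, hi₀⟩

variable [Fintype ι] [DecidableEq ι]

theorem traceOn_mem_piFinset (s : ι → D) :
    traceOn T s ∈ Fintype.piFinset fun _ => T.insertNone := by
  simp only [Fintype.mem_piFinset, traceOn]
  intro i
  split_ifs with hi
  · exact some_mem_insertNone.2 hi
  · exact none_mem_insertNone

theorem exists_lt_card_traceOn_eq {M : ℕ} {S : Finset (ι → D)}
    (hS : (#T + 1) ^ Fintype.card ι * M < #S) :
    ∃ S' ⊆ S, M < #S' ∧ ∃ s₀ ∈ S', ∀ s ∈ S', traceOn T s = traceOn T s₀ := by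
  obtain ⟨tr, -, htr⟩ := exists_lt_card_fiber_of_mul_lt_card_of_maps_to
    (fun s _ => traceOn_mem_piFinset (T := T) s)
    (by simpa [card_insertNone] using hS)
  obtain ⟨s₀, hs₀⟩ := card_pos.1 (M.zero_le.trans_lt htr)
  refine ⟨_, filter_subset _ S, htr, s₀, hs₀, fun s hs => ?_⟩
  rw [(mem_filter.1 hs).2, (mem_filter.1 hs₀).2]

end Trace

theorem pigeonhole_full_extraction_general {D : Type*} {n M : ℕ}
    (t : Fin n → D)
    (S : Finset (Fin n → D))
    (hmeet : ∀ s ∈ S, (Set.range s ∩ Set.range t).Nonempty)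
    (hcard : (2 ^ n) ^ 2 * Nat.factorial n * M < S.card) :
    ∃ (J : Finset (Fin n)), J.Nonempty ∧
      ∃ g : Fin n → D, (∀ j ∈ J, g j ∈ Set.range t) ∧
        ∃ S' ⊆ S, M < S'.card ∧
          ∀ s ∈ S', (∀ j ∈ J, s j = g j) ∧
            (∀ i ∉ J, s i ∉ Set.range t) ∧
            Set.range s ∩ Set.range t = g '' (J : Set (Fin n)) := by
  classical
  set T := univ.image t
  have hT : Set.range t = T := by simp [T]
  have hbound : (#T + 1) ^ Fintype.card (Fin n) * M < #S := by
    refine lt_of_le_of_lt (Nat.mul_le_mul_right M ?_) hcard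
    calc (#T + 1) ^ Fintype.card (Fin n) ≤ (n + 1) ^ n := by
          simpa using Nat.pow_le_pow_left (Nat.succ_le_succ (card_image_le.trans_eq (card_fin n))) n
      _ ≤ (2 ^ n) ^ 2 * n ! := by rw [← pow_mul', pow_mul]; exact n.succ_pow_le_four_pow_mul_factorial
  obtain ⟨S', hS'S, hM, s₀, hs₀, htrace⟩ := exists_lt_card_traceOn_eq hbound
  obtain ⟨_, ⟨i, rfl⟩, hi⟩ := hmeet s₀ (hS'S hs₀)
  refine ⟨univ.filter (s₀ · ∈ T), ⟨i, by simpa [hT] using hi⟩, s₀, by simp [hT], S', hS'S, hM,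
    fun s hs => ⟨fun j hj => apply_eq_of_traceOn_eq (htrace s hs) (mem_filter.1 hj).2,
      fun j hj => ?_, ?_⟩⟩
  · simpa [hT, mem_iff_of_traceOn_eq (htrace s hs) j] using hj
  · simpa [hT] using range_inter_eq_of_traceOn_eq (htrace s hs)

theorem pigeonhole_full_extraction {D : Type*} [Infinite D] {n M : ℕ} (hn : 1 ≤ n)
    (t : Fin n → D) (htinj : Function.Injective t)
    (S : Finset (Fin n → D))
    (hmeet : ∀ s ∈ S, (Set.range s ∩ Set.range t).Nonempty)
    (hcard : (2 ^ n) ^ 2 * Nat.factorial n * M < S.card) :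
    ∃ (J : Finset (Fin n)), J.Nonempty ∧
      ∃ g : Fin n → D, (∀ j ∈ J, g j ∈ Set.range t) ∧
        ∃ S' ⊆ S, M < S'.card ∧
          ∀ s ∈ S', (∀ j ∈ J, s j = g j) ∧
            (∀ i ∉ J, s i ∉ Set.range t) ∧
            Set.range s ∩ Set.range t = g '' (J : Set (Fin n)) :=
  pigeonhole_full_extraction_general t S hmeet hcard
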